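/- arXiv:math-ph/9812001 — 4 statements merged into one kernel-verified Lean document; each statement's English description precedes it below -/
import Mathlib

section
/- Let a = (a₁,a₂,a₃) be a nonzero vector in ℂ³ and let a·σ = a₁σ₁ + a₂σ₂ + a₃σ₃. Then there exists an invertible 2×2 complex matrix Λ such that Λ⁻¹ (a·σ) Λ is Hermitian if and only if a₁² + a₂² + a₃² is real and strictly positive. -/
def σ1 : Matrix (Fin 2) (Fin 2) ℂ := !![0, 1; 1, 0]
def σ2 : Matrix (Fin 2) (Fin 2) ℂ := !![0, -Complex.I; Complex.I, 0]
def σ3 : Matrix (Fin 2) (Fin 2) ℂ := !![1, 0; 0, -1]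

theorem stmt_3 (a₁ a₂ a₃ : ℂ) (ha : ¬ (a₁ = 0 ∧ a₂ = 0 ∧ a₃ = 0)) :
    (∃ Λ : Matrix (Fin 2) (Fin 2) ℂ, IsUnit Λ ∧
      (Λ⁻¹ * (a₁ • σ1 + a₂ • σ2 + a₃ • σ3) * Λ).IsHermitian) ↔
    ((a₁ ^ 2 + a₂ ^ 2 + a₃ ^ 2).im = 0 ∧ 0 < (a₁ ^ 2 + a₂ ^ 2 + a₃ ^ 2).re) := by
  set b : ℂ := a₁ - a₂ * Complex.I with hbdef
  set c : ℂ := a₁ + a₂ * Complex.I with hcdef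
  set s : ℂ := a₁ ^ 2 + a₂ ^ 2 + a₃ ^ 2 with hsdef
  have hAeq : a₁ • σ1 + a₂ • σ2 + a₃ • σ3 = !![a₃, b; c, -a₃] := by
    ext i j
    fin_cases i <;> fin_cases j <;> simp [σ1, σ2, σ3, hbdef, hcdef] <;> ring
  have hs : s = a₃ ^ 2 + b * c := by
    rw [hsdef, hbdef, hcdef]
    linear_combination a₂ ^ 2 * Complex.I_sq
  have hbc : b + c = 2 * a₁ := by rw [hbdef, hcdef]; ring
  have hcb : c - b = 2 * a₂ * Complex.I := by rw [hbdef, hcdef]; ring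
  rw [hAeq]
  clear_value b c s
  clear hbdef hcdef hsdef hAeq
  constructor
  · rintro ⟨Λ, hU, hH⟩
    have hdet := (Matrix.isUnit_iff_isUnit_det Λ).mp hU
    have hinv : Λ⁻¹ * Λ = 1 := Matrix.nonsing_inv_mul Λ hdet
    have hinv' : Λ * Λ⁻¹ = 1 := Matrix.mul_nonsing_inv Λ hdet
    set H : Matrix (Fin 2) (Fin 2) ℂ := Λ⁻¹ * !![a₃, b; c, -a₃] * Λ with hHdef
    have hA2 : !![a₃, b; c, -a₃] * !![a₃, b; c, -a₃] = s • 1 := by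
      ext i j
      fin_cases i <;> fin_cases j <;>
        simp [Matrix.mul_apply, Fin.sum_univ_two, Matrix.one_apply] <;>
        first | ring1 | linear_combination hs | linear_combination -hs | linear_combination 2*hs | linear_combination -2*hs
    have hH2 : H * H = s • (1 : Matrix (Fin 2) (Fin 2) ℂ) := by
      calc H * H = Λ⁻¹ * (!![a₃, b; c, -a₃] * (Λ * Λ⁻¹) * !![a₃, b; c, -a₃]) * Λ := by
            rw [hHdef]; noncomm_ring
        _ = Λ⁻¹ * (s • 1) * Λ := by rw [hinv', Matrix.mul_one, hA2]
        _ = s • (Λ⁻¹ * Λ) := by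
            rw [Matrix.mul_smul, Matrix.smul_mul, Matrix.mul_one]
        _ = s • 1 := by rw [hinv]
    -- entry relations
    have happ : ∀ i j, H i j = starRingEnd ℂ (H j i) := by
      intro i j
      have := congrFun (congrFun hH i) j
      simpa [Matrix.conjTranspose_apply] using this.symm
    have e00 : H 0 0 * H 0 0 + H 0 1 * H 1 0 = s := by
      have := congrFun (congrFun hH2 0) 0
      simpa [Matrix.mul_apply, Fin.sum_univ_two, Matrix.one_apply] using this
    have e11 : H 1 0 * H 0 1 + H 1 1 * H 1 1 = s := by
      have := congrFun (congrFun hH2 1) 1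
      simpa [Matrix.mul_apply, Fin.sum_univ_two, Matrix.one_apply] using this
    have hx : (H 0 0).im = 0 := by
      have := happ 0 0
      exact (Complex.conj_eq_iff_im.mp this.symm)
    have hz : (H 1 1).im = 0 := by
      have := happ 1 1
      exact (Complex.conj_eq_iff_im.mp this.symm)
    have h10 : H 1 0 = starRingEnd ℂ (H 0 1) := happ 1 0
    have hsform : s = H 0 0 * H 0 0 + (Complex.normSq (H 0 1) : ℂ) := by
      rw [← e00, h10, Complex.mul_conj]
    have him : s.im = 0 := by
      rw [hsform]
      simp [Complex.add_im, Complex.mul_im, hx]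
    have hre : s.re = (H 0 0).re ^ 2 + Complex.normSq (H 0 1) := by
      rw [hsform]
      simp [Complex.add_re, Complex.mul_re, hx]
      ring
    refine ⟨him, ?_⟩
    rcases lt_or_eq_of_le (by
      rw [hre]
      exact add_nonneg (sq_nonneg _) (Complex.normSq_nonneg _) : (0:ℝ) ≤ s.re) with h | h
    · exact h
    -- s.re = 0 : derive contradiction
    exfalso
    have hs0 : s = 0 := Complex.ext (h.symm) him
    have hnormsq : Complex.normSq (H 0 1) = 0 ∧ (H 0 0).re = 0 := by
      constructor <;> nlinarith [Complex.normSq_nonneg (H 0 1), sq_nonneg ((H 0 0).re), hre, h.symm]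
    have hy0 : H 0 1 = 0 := Complex.normSq_eq_zero.mp hnormsq.1
    have hx0 : H 0 0 = 0 := Complex.ext hnormsq.2 hx
    have h10' : H 1 0 = 0 := by rw [h10, hy0]; simp
    have hz0 : H 1 1 = 0 := by
      have : H 1 1 * H 1 1 = 0 := by
        rw [hs0] at e11
        rw [h10'] at e11
        linear_combination e11
      exact mul_self_eq_zero.mp this
    have hHzero : H = 0 := by
      ext i j
      fin_cases i <;> fin_cases j <;> simp [hx0, hy0, h10', hz0]
    have hAzero : !![a₃, b; c, -a₃] = 0 := by
      have : Λ * H * Λ⁻¹ = !![a₃, b; c, -a₃] := by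
        rw [hHdef]
        calc Λ * (Λ⁻¹ * !![a₃, b; c, -a₃] * Λ) * Λ⁻¹
            = (Λ * Λ⁻¹) * !![a₃, b; c, -a₃] * (Λ * Λ⁻¹) := by noncomm_ring
          _ = !![a₃, b; c, -a₃] := by rw [hinv', Matrix.one_mul, Matrix.mul_one]
      rw [← this, hHzero, Matrix.mul_zero, Matrix.zero_mul]
    have ha3 : a₃ = 0 := by
      have := congrFun (congrFun hAzero 0) 0; simpa using this
    have hb0 : b = 0 := by
      have := congrFun (congrFun hAzero 0) 1; simpa using this
    have hc0 : c = 0 := by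
      have := congrFun (congrFun hAzero 1) 0; simpa using this
    have ha1 : a₁ = 0 := by
      have h2 : (2:ℂ) * a₁ = 0 := by rw [← hbc, hb0, hc0]; ring
      simpa using h2
    have ha2 : a₂ = 0 := by
      have h2 : 2 * a₂ * Complex.I = 0 := by rw [← hcb, hb0, hc0]; ring
      rcases mul_eq_zero.mp h2 with h3 | h3
      · rcases mul_eq_zero.mp h3 with h4 | h4
        · norm_num at h4
        · exact h4
      · exact absurd h3 Complex.I_ne_zero
    exact ha ⟨ha1, ha2, ha3⟩
  · rintro ⟨him, hre⟩
    have hsre : s = ((s.re : ℝ) : ℂ) := (Complex.ext (by simp) (by simp [him])).symm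
    by_cases hb : b = 0
    · -- s = a₃², a₃ real nonzero
      have hs3 : s = a₃ ^ 2 := by rw [hs, hb]; ring
      have him3 : (a₃ ^ 2).im = 0 := by rw [← hs3]; exact him
      have hre3 : 0 < (a₃ ^ 2).re := by rw [← hs3]; exact hre
      have h2 : 2 * a₃.re * a₃.im = 0 := by
        have h5 : (a₃ ^ 2).im = 2 * a₃.re * a₃.im := by
          rw [pow_two, Complex.mul_im]; ring
        linarith [him3, h5]
      have h3 : a₃.re ^ 2 - a₃.im ^ 2 > 0 := by
        have h5 : (a₃ ^ 2).re = a₃.re ^ 2 - a₃.im ^ 2 := by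
          rw [pow_two, Complex.mul_re]; ring
        linarith [hre3, h5]
      have ha3im : a₃.im = 0 := by
        rcases mul_eq_zero.mp h2 with h4 | h4
        · have hre0 : a₃.re = 0 := by
            rcases mul_eq_zero.mp h4 with h5 | h5
            · norm_num at h5
            · exact h5
          exfalso
          rw [hre0] at h3
          nlinarith [sq_nonneg a₃.im]
        · exact h4
      have ha3ne : a₃ ≠ 0 := by
        intro h0
        rw [h0] at hre3
        simp at hre3
      refine ⟨!![2*a₃, 0; c, 1], ?_, ?_⟩
      · rw [Matrix.isUnit_iff_isUnit_det, Matrix.det_fin_two_of]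
        refine isUnit_iff_ne_zero.mpr ?_
        simp [ha3ne]
      · have hdetu : IsUnit (!![2*a₃, 0; c, 1]).det := by
          rw [Matrix.det_fin_two_of]
          refine isUnit_iff_ne_zero.mpr ?_
          simp [ha3ne]
        have hinv : (!![2*a₃, 0; c, 1])⁻¹ * !![2*a₃, 0; c, 1] = 1 :=
          Matrix.nonsing_inv_mul _ hdetu
        have hcomm : !![a₃, b; c, -a₃] * !![2*a₃, 0; c, 1]
            = !![2*a₃, 0; c, 1] * !![a₃, 0; 0, -a₃] := by
          rw [hb]
          ext i j
          fin_cases i <;> fin_cases j <;>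
            simp [Matrix.mul_apply, Fin.sum_univ_two] <;> ring
        have : (!![2*a₃, 0; c, 1])⁻¹ * !![a₃, b; c, -a₃] * !![2*a₃, 0; c, 1]
            = !![a₃, 0; 0, -a₃] := by
          rw [Matrix.mul_assoc, hcomm, ← Matrix.mul_assoc, hinv, Matrix.one_mul]
        rw [this]
        refine Matrix.IsHermitian.ext fun i j => ?_
        fin_cases i <;> fin_cases j <;>
          simp [Matrix.conjTranspose_apply, Complex.conj_eq_iff_im, ha3im]
    · -- b ≠ 0
      set t : ℝ := Real.sqrt s.re with htdef
      have ht0 : 0 < t := Real.sqrt_pos.mpr hre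
      have htc : (t : ℂ) ^ 2 = s := by
        rw [hsre]
        norm_cast
        rw [htdef, Real.sq_sqrt (le_of_lt hre)]
      have htne : (t : ℂ) ≠ 0 := by
        simp only [ne_eq, Complex.ofReal_eq_zero]
        exact ne_of_gt ht0
      refine ⟨!![b, b; (t:ℂ) - a₃, -(t:ℂ) - a₃], ?_, ?_⟩
      · rw [Matrix.isUnit_iff_isUnit_det, Matrix.det_fin_two_of]
        refine isUnit_iff_ne_zero.mpr ?_
        have heq : b * (-(t:ℂ) - a₃) - b * ((t:ℂ) - a₃) = -(2*(t:ℂ)) * b := by ring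
        rw [heq]
        exact mul_ne_zero (by simpa using htne) hb
      · have hdetu : IsUnit (!![b, b; (t:ℂ) - a₃, -(t:ℂ) - a₃]).det := by
          rw [Matrix.det_fin_two_of]
          refine isUnit_iff_ne_zero.mpr ?_
          have heq : b * (-(t:ℂ) - a₃) - b * ((t:ℂ) - a₃) = -(2*(t:ℂ)) * b := by ring
          rw [heq]
          exact mul_ne_zero (by simpa using htne) hb
        have hinv : (!![b, b; (t:ℂ) - a₃, -(t:ℂ) - a₃])⁻¹ * !![b, b; (t:ℂ) - a₃, -(t:ℂ) - a₃] = 1 :=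
          Matrix.nonsing_inv_mul _ hdetu
        have hts : (t:ℂ)^2 = a₃ ^ 2 + b * c := by rw [htc, hs]
        have hcomm : !![a₃, b; c, -a₃] * !![b, b; (t:ℂ) - a₃, -(t:ℂ) - a₃]
            = !![b, b; (t:ℂ) - a₃, -(t:ℂ) - a₃] * !![(t:ℂ), 0; 0, -(t:ℂ)] := by
          ext i j
          fin_cases i <;> fin_cases j <;>
            simp [Matrix.mul_apply, Fin.sum_univ_two] <;>
            first
              | ring1
              | linear_combination hts
              | linear_combination -hts
              | linear_combination 2*hts
              | linear_combination -2*hts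
        have : (!![b, b; (t:ℂ) - a₃, -(t:ℂ) - a₃])⁻¹ * !![a₃, b; c, -a₃] * !![b, b; (t:ℂ) - a₃, -(t:ℂ) - a₃]
            = !![(t:ℂ), 0; 0, -(t:ℂ)] := by
          rw [Matrix.mul_assoc, hcomm, ← Matrix.mul_assoc, hinv, Matrix.one_mul]
        rw [this]
        refine Matrix.IsHermitian.ext fun i j => ?_
        fin_cases i <;> fin_cases j <;>
          simp [Matrix.conjTranspose_apply, Complex.conj_eq_iff_im]
end

section
/- With T₋ = Q₋ - R₋, T₀ = Q₀ - R₀, T₊ = Q₊ - R₊ as above, the Casimir element C₁ = T₀² - T₊T₋ - T₀ acts as multiplication by the scalar (m²-1)/4 on smooth ℂ²-valued functions, i.e. C₁ψ = ((m²-1)/4)ψ for all smooth ψ. -/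
noncomputable def S0 : Matrix (Fin 2) (Fin 2) ℂ := (1/2 : ℂ) • σ3
noncomputable def Sp : Matrix (Fin 2) (Fin 2) ℂ := (1/2 : ℂ) • (Complex.I • σ2 + σ1)
noncomputable def Sm : Matrix (Fin 2) (Fin 2) ℂ := (1/2 : ℂ) • (Complex.I • σ2 - σ1)

noncomputable def Qm : (ℝ → Fin 2 → ℂ) → (ℝ → Fin 2 → ℂ) :=
  fun ψ x => deriv ψ x
noncomputable def Q0 (m : ℕ) : (ℝ → Fin 2 → ℂ) → (ℝ → Fin 2 → ℂ) :=
  fun ψ x => (x : ℂ) • deriv ψ x + (S0 - (((m : ℂ) - 1)/2) • 1).mulVec (ψ x)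
noncomputable def Qp (m : ℕ) : (ℝ → Fin 2 → ℂ) → (ℝ → Fin 2 → ℂ) :=
  fun ψ x => ((x : ℂ) ^ 2) • deriv ψ x +
    ((2 * (x : ℂ)) • S0 + Sp - (((m : ℂ) - 1) * (x : ℂ)) • 1).mulVec (ψ x)

/-- The multiplication operators R₋, R₀, R₊. -/
noncomputable def Rm : (ℝ → Fin 2 → ℂ) → (ℝ → Fin 2 → ℂ) :=
  fun ψ x => Sm.mulVec (ψ x)
noncomputable def R0 : (ℝ → Fin 2 → ℂ) → (ℝ → Fin 2 → ℂ) :=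
  fun ψ x => ((x : ℂ) • Sm + S0).mulVec (ψ x)
noncomputable def Rp : (ℝ → Fin 2 → ℂ) → (ℝ → Fin 2 → ℂ) :=
  fun ψ x => (((x : ℂ) ^ 2) • Sm + (2 * (x : ℂ)) • S0 + Sp).mulVec (ψ x)

/-- T₋ = Q₋ - R₋, T₀ = Q₀ - R₀, T₊ = Q₊ - R₊. -/
noncomputable def Tm : (ℝ → Fin 2 → ℂ) → (ℝ → Fin 2 → ℂ) :=
  fun ψ x => Qm ψ x - Rm ψ x
noncomputable def T0 (m : ℕ) : (ℝ → Fin 2 → ℂ) → (ℝ → Fin 2 → ℂ) :=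
  fun ψ x => Q0 m ψ x - R0 ψ x
noncomputable def Tp (m : ℕ) : (ℝ → Fin 2 → ℂ) → (ℝ → Fin 2 → ℂ) :=
  fun ψ x => Qp m ψ x - Rp ψ x


lemma Sm_sq : Sm * Sm = 0 := by
  have h : Sm = !![0, 0; -1, 0] := by
    simp only [Sm, σ1, σ2]
    ext i j
    fin_cases i <;> fin_cases j <;>
      simp [Matrix.smul_apply] <;> ring
  rw [h]
  ext i j
  fin_cases i <;> fin_cases j <;> simp [Matrix.mul_apply, Fin.sum_univ_two]

lemma hasDerivAt_mulVec (A : Matrix (Fin 2) (Fin 2) ℂ) {f : ℝ → Fin 2 → ℂ}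
    {f' : Fin 2 → ℂ} {x : ℝ} (hf : HasDerivAt f f' x) :
    HasDerivAt (fun y => A.mulVec (f y)) (A.mulVec f') x := by
  have hcomp : ∀ j, HasDerivAt (fun y => f y j) (f' j) x := fun j => hasDerivAt_pi.mp hf j
  rw [hasDerivAt_pi]
  intro i
  simpa [Matrix.mulVec, dotProduct, Fin.sum_univ_two, Pi.add_def] using
    ((hcomp 0).const_mul (A i 0)).add ((hcomp 1).const_mul (A i 1))

lemma hasDerivAt_ofReal' (x : ℝ) : HasDerivAt (fun y : ℝ => (y : ℂ)) 1 x := by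
  simpa using (hasDerivAt_id x).ofReal_comp

lemma T0_apply (m : ℕ) (ψ : ℝ → Fin 2 → ℂ) (x : ℝ) :
    T0 m ψ x = (x : ℂ) • deriv ψ x - (x : ℂ) • Sm.mulVec (ψ x)
      - (((m : ℂ) - 1)/2) • ψ x := by
  simp only [T0, Q0, R0, Matrix.sub_mulVec, Matrix.add_mulVec,
    Matrix.smul_mulVec, Matrix.one_mulVec]
  abel

lemma Tm_apply (ψ : ℝ → Fin 2 → ℂ) (x : ℝ) :
    Tm ψ x = deriv ψ x - Sm.mulVec (ψ x) := rfl

lemma Tp_apply (m : ℕ) (ψ : ℝ → Fin 2 → ℂ) (x : ℝ) :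
    Tp m ψ x = ((x : ℂ) ^ 2) • deriv ψ x - ((x : ℂ) ^ 2) • Sm.mulVec (ψ x)
      - (((m : ℂ) - 1) * (x : ℂ)) • ψ x := by
  simp only [Tp, Qp, Rp, Matrix.sub_mulVec, Matrix.add_mulVec,
    Matrix.smul_mulVec, Matrix.one_mulVec]
  abel

theorem stmt_13 (m : ℕ) (hm : 2 ≤ m) :
    ∀ ψ : ℝ → Fin 2 → ℂ, ContDiff ℝ (⊤ : ℕ∞) ψ → ∀ x : ℝ,
      T0 m (T0 m ψ) x - Tp m (Tm ψ) x - T0 m ψ x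
        = ((((m : ℂ) ^ 2 - 1)) / 4) • ψ x := by
  intro ψ hψ x
  set c : ℂ := ((m : ℂ) - 1)/2 with hc
  set D : ℝ → Fin 2 → ℂ := deriv ψ with hD
  set D2 : ℝ → Fin 2 → ℂ := deriv D with hD2
  have hψdiff : Differentiable ℝ ψ := hψ.differentiable (by simp)
  have hDdiff : Differentiable ℝ D :=
    (contDiff_infty_iff_deriv.mp (hψ.of_le (by simp))).2.differentiable
      (by simp)
  have hasψ : ∀ y, HasDerivAt ψ (D y) y := fun y => (hψdiff y).hasDerivAt
  have hasD : ∀ y, HasDerivAt D (D2 y) y := fun y => (hDdiff y).hasDerivAt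
  -- derivative of T0 m ψ
  have hT0fun : T0 m ψ = fun z : ℝ =>
      (z : ℂ) • D z - (z : ℂ) • Sm.mulVec (ψ z) - c • ψ z :=
    funext fun z => T0_apply m ψ z
  have hTmfun : Tm ψ = fun z : ℝ => D z - Sm.mulVec (ψ z) :=
    funext fun z => Tm_apply ψ z
  have hg : HasDerivAt (T0 m ψ)
      (((x : ℂ) • D2 x + (1 : ℂ) • D x)
        - ((x : ℂ) • Sm.mulVec (D x) + (1 : ℂ) • Sm.mulVec (ψ x))
        - c • D x) x := by
    rw [hT0fun]
    exact (((hasDerivAt_ofReal' x).smul (hasD x)).sub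
      ((hasDerivAt_ofReal' x).smul (hasDerivAt_mulVec Sm (hasψ x)))).sub
      ((hasψ x).const_smul c)
  have hh : HasDerivAt (Tm ψ) (D2 x - Sm.mulVec (D x)) x := by
    rw [hTmfun]
    exact (hasD x).sub (hasDerivAt_mulVec Sm (hasψ x))
  have hgd := hg.deriv
  have hhd := hh.deriv
  have hSm2 : ∀ v : Fin 2 → ℂ, Sm.mulVec (Sm.mulVec v) = 0 := by
    intro v
    rw [Matrix.mulVec_mulVec, Sm_sq, Matrix.zero_mulVec]
  rw [T0_apply m (T0 m ψ) x, Tp_apply m (Tm ψ) x, hgd, hhd]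
  simp only [T0_apply m ψ x, Tm_apply ψ x, Matrix.mulVec_add, Matrix.mulVec_sub, Matrix.mulVec_smul,
    hSm2, one_smul, ← hD, ← hD2, ← hc]
  match_scalars <;> ring
end

section
/- For nonzero complex vectors a, b ∈ ℂ³ with b not a real multiple of a, if there exists a single invertible 2×2 matrix Λ such that both Λ⁻¹(a·σ)Λ and Λ⁻¹(b·σ)Λ are Hermitian, then a·a > 0, b·b > 0, and (a×b)·(a×b) > 0 (in particular all three quantities are real). -/
/-- a·σ for a complex vector a ∈ ℂ³. -/
def dotσ (a : Fin 3 → ℂ) : Matrix (Fin 2) (Fin 2) ℂ :=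
  a 0 • σ1 + a 1 • σ2 + a 2 • σ3

/-- Bilinear dot product (no conjugation). -/
def cdot (a b : Fin 3 → ℂ) : ℂ := a 0 * b 0 + a 1 * b 1 + a 2 * b 2

/-- Formal cross product of complex vectors. -/
def ccross (a b : Fin 3 → ℂ) : Fin 3 → ℂ :=
  ![a 1 * b 2 - a 2 * b 1, a 2 * b 0 - a 0 * b 2, a 0 * b 1 - a 1 * b 0]

/-- z > 0 for a complex number: z is real and positive. -/
def posC (z : ℂ) : Prop := z.im = 0 ∧ 0 < z.re

lemma dotσ_sq (c : Fin 3 → ℂ) : dotσ c * dotσ c = (cdot c c) • 1 := by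
  ext i j
  fin_cases i <;> fin_cases j <;>
    simp [dotσ, σ1, σ2, σ3, cdot, Matrix.mul_apply, Fin.sum_univ_two, Matrix.one_apply] <;>
    ring_nf <;> simp [Complex.I_sq] <;> ring

lemma dotσ_eq_zero {c : Fin 3 → ℂ} (h : dotσ c = 0) : c = 0 := by
  have h00 := congrFun (congrFun h 0) 0
  have h01 := congrFun (congrFun h 0) 1
  have h10 := congrFun (congrFun h 1) 0
  simp [dotσ, σ1, σ2, σ3] at h00 h01 h10
  funext i
  fin_cases i <;> simp
  · linear_combination (h01 + h10)/2
  · linear_combination Complex.I * (h01 - h10)/2 + c 1 * Complex.I_sq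
  · exact h00

lemma dotσ_lin (x y : ℂ) (a b : Fin 3 → ℂ) :
    dotσ (x • a + y • b) = x • dotσ a + y • dotσ b := by
  ext i j
  fin_cases i <;> fin_cases j <;> simp [dotσ, σ1, σ2, σ3] <;> ring

lemma herm_sq (M : Matrix (Fin 2) (Fin 2) ℂ) (hM : M.IsHermitian) (z : ℂ)
    (hz : M * M = z • 1) : z.im = 0 ∧ 0 ≤ z.re ∧ (z = 0 → M = 0) := by
  have hc : ∀ i j, (starRingEnd ℂ) (M i j) = M j i := fun i j => hM.apply j i
  have e00 : z = (starRingEnd ℂ) (M 0 0) * M 0 0 + (starRingEnd ℂ) (M 1 0) * M 1 0 := by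
    have := congrFun (congrFun hz 0) 0
    simp [Matrix.mul_apply, Fin.sum_univ_two, Matrix.one_apply] at this
    rw [← this, hc 0 0, hc 1 0]
  have e11 : z = (starRingEnd ℂ) (M 0 1) * M 0 1 + (starRingEnd ℂ) (M 1 1) * M 1 1 := by
    have := congrFun (congrFun hz 1) 1
    simp [Matrix.mul_apply, Fin.sum_univ_two, Matrix.one_apply] at this
    rw [← this, hc 0 1, hc 1 1]
  have e00' : z = ((Complex.normSq (M 0 0) + Complex.normSq (M 1 0) : ℝ) : ℂ) := by
    rw [e00]; simp [Complex.normSq_eq_conj_mul_self]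
  have e11' : z = ((Complex.normSq (M 0 1) + Complex.normSq (M 1 1) : ℝ) : ℂ) := by
    rw [e11]; simp [Complex.normSq_eq_conj_mul_self]
  refine ⟨by rw [e00']; simp,
    by rw [e00']; simp; exact add_nonneg (Complex.normSq_nonneg _) (Complex.normSq_nonneg _),
    fun h0 => ?_⟩
  rw [h0] at e00' e11'
  have h1 : Complex.normSq (M 0 0) = 0 ∧ Complex.normSq (M 1 0) = 0 := by
    constructor <;> nlinarith [Complex.normSq_nonneg (M 0 0), Complex.normSq_nonneg (M 1 0),
      Complex.ofReal_eq_zero.mp e00'.symm]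
  have h2 : Complex.normSq (M 0 1) = 0 ∧ Complex.normSq (M 1 1) = 0 := by
    constructor <;> nlinarith [Complex.normSq_nonneg (M 0 1), Complex.normSq_nonneg (M 1 1),
      Complex.ofReal_eq_zero.mp e11'.symm]
  ext i j
  fin_cases i <;> fin_cases j <;>
    simp [Complex.normSq_eq_zero.mp h1.1, Complex.normSq_eq_zero.mp h1.2,
      Complex.normSq_eq_zero.mp h2.1, Complex.normSq_eq_zero.mp h2.2]

lemma real_of_im_zero {z : ℂ} (h : z.im = 0) : z = (z.re : ℂ) :=
  Complex.ext rfl (by simp [h])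

theorem stmt_16 (a b : Fin 3 → ℂ) (ha : a ≠ 0) (hb : b ≠ 0)
    (hnm : ∀ lam : ℝ, b ≠ (lam : ℂ) • a)
    (h : ∃ Λ : Matrix (Fin 2) (Fin 2) ℂ, IsUnit Λ ∧
      (Λ⁻¹ * dotσ a * Λ).IsHermitian ∧ (Λ⁻¹ * dotσ b * Λ).IsHermitian) :
    posC (cdot a a) ∧ posC (cdot b b) ∧ posC (cdot (ccross a b) (ccross a b)) := by
  obtain ⟨Λ, hU, hMa, hMb⟩ := h
  have hdet := (Matrix.isUnit_iff_isUnit_det Λ).mp hU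
  have hmul : Λ * Λ⁻¹ = 1 := Matrix.mul_nonsing_inv Λ hdet
  have hinv : Λ⁻¹ * Λ = 1 := Matrix.nonsing_inv_mul Λ hdet
  -- conjugation preserves the square identity
  have key1 : ∀ c, (Λ⁻¹ * dotσ c * Λ) * (Λ⁻¹ * dotσ c * Λ) = cdot c c • 1 := by
    intro c
    calc (Λ⁻¹ * dotσ c * Λ) * (Λ⁻¹ * dotσ c * Λ)
        = Λ⁻¹ * (dotσ c * ((Λ * Λ⁻¹) * (dotσ c * Λ))) := by
          simp only [Matrix.mul_assoc]
      _ = Λ⁻¹ * ((dotσ c * dotσ c) * Λ) := by rw [hmul, one_mul, Matrix.mul_assoc]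
      _ = cdot c c • 1 := by
          rw [dotσ_sq]
          simp [Matrix.smul_mul, Matrix.mul_smul, hinv]
  have key0 : ∀ c, Λ⁻¹ * dotσ c * Λ = 0 → c = 0 := by
    intro c h0
    apply dotσ_eq_zero
    have h2 : Λ * (Λ⁻¹ * dotσ c * Λ) * Λ⁻¹ = dotσ c := by
      rw [show Λ * (Λ⁻¹ * dotσ c * Λ) * Λ⁻¹ = (Λ * Λ⁻¹) * dotσ c * (Λ * Λ⁻¹) by
        simp only [Matrix.mul_assoc], hmul]
      simp
    rw [h0] at h2
    simpa using h2.symm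
  have keylin : ∀ (x y : ℂ) (u v : Fin 3 → ℂ),
      Λ⁻¹ * dotσ (x • u + y • v) * Λ
        = x • (Λ⁻¹ * dotσ u * Λ) + y • (Λ⁻¹ * dotσ v * Λ) := by
    intro x y u v
    rw [dotσ_lin]
    simp [Matrix.mul_add, Matrix.add_mul, Matrix.mul_smul, Matrix.smul_mul]
  have fact : ∀ c, (Λ⁻¹ * dotσ c * Λ).IsHermitian →
      (cdot c c).im = 0 ∧ 0 ≤ (cdot c c).re ∧ (cdot c c = 0 → c = 0) := by
    intro c hc
    obtain ⟨h1, h2, h3⟩ := herm_sq _ hc _ (key1 c)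
    exact ⟨h1, h2, fun hz => key0 c (h3 hz)⟩
  obtain ⟨ha1, ha2, ha3⟩ := fact a hMa
  obtain ⟨hb1, hb2, hb3⟩ := fact b hMb
  have hane : cdot a a ≠ 0 := fun h0 => ha (ha3 h0)
  have hbne : cdot b b ≠ 0 := fun h0 => hb (hb3 h0)
  have hare : 0 < (cdot a a).re := by
    rcases lt_or_eq_of_le ha2 with h | h
    · exact h
    · exact absurd (Complex.ext h.symm ha1) hane
  have hbre : 0 < (cdot b b).re := by
    rcases lt_or_eq_of_le hb2 with h | h
    · exact h
    · exact absurd (Complex.ext h.symm hb1) hbne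
  -- γ = cdot a b is real, via (a+b)
  have hsumH : (Λ⁻¹ * dotσ (a + b) * Λ).IsHermitian := by
    have heq : Λ⁻¹ * dotσ (a + b) * Λ = (Λ⁻¹ * dotσ a * Λ) + (Λ⁻¹ * dotσ b * Λ) := by
      have := keylin 1 1 a b; simpa using this
    rw [heq]; exact hMa.add hMb
  obtain ⟨hs1, _, _⟩ := fact (a + b) hsumH
  have hsval : cdot (a + b) (a + b) = cdot a a + 2 * cdot a b + cdot b b := by
    simp [cdot]; ring
  have hγ : (cdot a b).im = 0 := by
    rw [hsval] at hs1
    simp [Complex.add_im, Complex.mul_im] at hs1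
    linarith [hs1, ha1, hb1]
  -- the Hermitian combination P = β•A − γ•B
  set β := cdot b b with hβdef
  set γ := cdot a b with hγdef
  have hstarβ : star β = β := by
    rw [Complex.star_def]; exact Complex.conj_eq_iff_im.mpr hb1
  have hstarγ : star (-γ) = -γ := by
    rw [Complex.star_def, map_neg, Complex.conj_eq_iff_im.mpr hγ]
  have hPH : (Λ⁻¹ * dotσ (β • a + (-γ) • b) * Λ).IsHermitian := by
    rw [keylin]
    unfold Matrix.IsHermitian
    rw [Matrix.conjTranspose_add, Matrix.conjTranspose_smul, Matrix.conjTranspose_smul,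
      hMa.eq, hMb.eq, hstarβ, hstarγ]
  obtain ⟨hp1, hp2, hp3⟩ := fact _ hPH
  have hval : cdot (β • a + (-γ) • b) (β • a + (-γ) • b)
      = β * (cdot a a * β - γ * γ) := by
    simp [cdot, hβdef, hγdef]; ring
  set z := cdot a a * β - γ * γ with hzdef
  rw [hval] at hp1 hp2 hp3
  have hzim : z.im = 0 := by
    have : (β * z).im = β.re * z.im := by simp [Complex.mul_im, hb1]
    rw [this] at hp1
    rcases mul_eq_zero.mp hp1 with h | h
    · exact absurd (Complex.ext h hb1) hbne
    · exact h
  have hzre : 0 ≤ z.re := by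
    have : (β * z).re = β.re * z.re := by simp [Complex.mul_re, hb1, hzim]
    rw [this] at hp2
    nlinarith [hbre, hp2]
  have hzpos : 0 < z.re := by
    rcases lt_or_eq_of_le hzre with h | h
    · exact h
    · exfalso
      have hz0 : z = 0 := Complex.ext h.symm hzim
      have hc0 : β • a + (-γ) • b = 0 := hp3 (by rw [hz0, mul_zero])
      have hcomp : ∀ i, β * a i = γ * b i := by
        intro i
        have := congrFun hc0 i
        simp at this
        linear_combination this
      have hγne : γ ≠ 0 := by
        intro h0
        apply ha
        funext i
        have := hcomp i
        rw [h0, zero_mul] at this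
        simpa using (mul_eq_zero.mp this).resolve_left hbne
      have hγre : γ.re ≠ 0 := fun h0 => hγne (Complex.ext h0 hγ)
      apply hnm (β.re / γ.re)
      funext i
      have hγc : γ = (γ.re : ℂ) := real_of_im_zero hγ
      have hβc : β = (β.re : ℂ) := real_of_im_zero hb1
      have hbi : b i = (β / γ) * a i := by
        field_simp
        linear_combination -hcomp i
      have hcast : ((β.re / γ.re : ℝ) : ℂ) = β / γ := by
        rw [Complex.ofReal_div, ← hβc, ← hγc]
      simp only [Pi.smul_apply, smul_eq_mul]
      rw [hcast]
      exact hbi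
  refine ⟨⟨ha1, hare⟩, ⟨hb1, hbre⟩, ?_, ?_⟩
  · show (cdot (ccross a b) (ccross a b)).im = 0
    have : cdot (ccross a b) (ccross a b) = z := by
      rw [hzdef, hβdef, hγdef]; simp [cdot, ccross]; ring
    rw [this]; exact hzim
  · show 0 < (cdot (ccross a b) (ccross a b)).re
    have : cdot (ccross a b) (ccross a b) = z := by
      rw [hzdef, hβdef, hγdef]; simp [cdot, ccross]; ring
    rw [this]; exact hzpos
end

section
/- Let m ≥ 1 be a natural number. The 2m functions f_j(y) = exp(y³/6) yʲ e₁ (j = 0,…,m-2) and g_k(y) = exp(y³/6)(m yᵏ e₂ - k y^{k-1} e₁) (k = 0,…,m) are eigenspace-generating for the operator Ĥψ = ψ'' + (-(1/4)y⁴ - m y + σ₃ y + σ₁)ψ in the sense that Ĥ maps the span of these 2m functions into itself. -/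
def e1 : Fin 2 → ℂ := ![1, 0]
def e2 : Fin 2 → ℂ := ![0, 1]

/-- The basis functions f_j(y) = exp(y³/6) yʲ e₁ (j = 0,…,m-2) and
g_k(y) = exp(y³/6)(m yᵏ e₂ - k y^{k-1} e₁) (k = 0,…,m). -/
noncomputable def basisSet (m : ℕ) : Set (ℝ → Fin 2 → ℂ) :=
  {f | (∃ j : ℕ, j + 2 ≤ m ∧ f = fun (y : ℝ) =>
          Complex.exp ((y : ℂ) ^ 3 / 6) • (((y : ℂ) ^ j) • e1)) ∨
       (∃ k : ℕ, k ≤ m ∧ f = fun (y : ℝ) =>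
          Complex.exp ((y : ℂ) ^ 3 / 6) •
            (((m : ℂ) * (y : ℂ) ^ k) • e2 - ((k : ℂ) * (y : ℂ) ^ (k - 1)) • e1))}

/-- Ĥψ(y) = ψ''(y) + (-(1/4)y⁴ - m y + σ₃ y + σ₁)ψ(y). -/
noncomputable def Hop (m : ℕ) : (ℝ → Fin 2 → ℂ) → (ℝ → Fin 2 → ℂ) :=
  fun ψ y => deriv (deriv ψ) y +
    ((-(1/4 : ℂ) * (y : ℂ) ^ 4 - (m : ℂ) * (y : ℂ)) • (1 : Matrix (Fin 2) (Fin 2) ℂ)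
      + (y : ℂ) • σ3 + σ1).mulVec (ψ y)

/-!
Write `ψ = exp (y³/6) • (p(y), q(y))` with polynomials `p, q`. Since
`exp (-y³/6) ∘ d/dy ∘ exp (y³/6) = d/dy + y²/2`, conjugating `Hop m` by `exp (y³/6)` cancels the
quartic part of the potential and leaves the operator `conjHop m` on pairs of polynomials. The
spanning functions are `f_j = exp (y³/6) • (X^j, 0)` and `g_k = exp (y³/6) • (-(X^k)', m X^k)`,
so the span corresponds to the pairs `(p - q', m q)` with `deg p < m - 1` and `deg q ≤ m`. Writing
`conjHop m (p - q', m q)` in the same form again, the only terms that could raise the degree are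
`X² r' - (n - 1) X r` for `deg r < n`, and Euler's identity `X (X^k)' = k X^k` shows that their
top coefficient vanishes.
-/

open Polynomial

theorem derivative_mem_degreeLT {R : Type*} [Semiring R] {n : ℕ} {p : R[X]}
    (hp : p ∈ degreeLT R (n + 1)) : derivative p ∈ degreeLT R n := by
  rw [mem_degreeLT, degree_lt_iff_coeff_zero] at hp ⊢
  intro k hk
  rw [coeff_derivative, hp (k + 1) (by omega), zero_mul]

theorem coeff_X_mul_derivative {R : Type*} [CommSemiring R] (p : R[X]) (k : ℕ) :
    (X * derivative p).coeff k = k * p.coeff k := by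
  cases k with
  | zero => simp
  | succ k =>
    rw [coeff_X_mul, coeff_derivative]
    push_cast
    ring

/-- The coefficient of `X ^ (k + 1)` is `(k + 1 - n) * p.coeff k`. -/
theorem X_sq_mul_derivative_sub_mem_degreeLT {R : Type*} [CommRing R] {n : ℕ} {p : R[X]}
    (hp : p ∈ degreeLT R n) :
    X ^ 2 * derivative p - ((n : R[X]) - 1) * X * p ∈ degreeLT R n := by
  rw [mem_degreeLT, degree_lt_iff_coeff_zero] at hp ⊢
  rintro (_ | k) hk
  · simp
  have hX : X ^ 2 * derivative p - ((n : R[X]) - 1) * X * p =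
      X * (X * derivative p - C ((n : R) - 1) * p) := by
    simp only [map_sub, map_natCast, map_one]
    ring
  rw [hX, coeff_X_mul, coeff_sub, coeff_X_mul_derivative, coeff_C_mul]
  obtain rfl | hnk : k + 1 = n ∨ n ≤ k := by omega
  · push_cast
    ring
  · rw [hp k hnk]
    ring

theorem X_pow_mem_degreeLT {R : Type*} [Semiring R] {j n : ℕ} (h : j < n) :
    (X ^ j : R[X]) ∈ degreeLT R n :=
  mem_degreeLT.2 ((degree_X_pow_le j).trans_lt (by exact_mod_cast h))

noncomputable def expCubicMul (p : ℂ[X]) (y : ℝ) : ℂ :=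
  Complex.exp ((y : ℂ) ^ 3 / 6) * p.eval (y : ℂ)

noncomputable def twistedDerivative (p : ℂ[X]) : ℂ[X] := derivative p + C 2⁻¹ * X ^ 2 * p

theorem hasDerivAt_expCubicMul (p : ℂ[X]) (y : ℝ) :
    HasDerivAt (expCubicMul p) (expCubicMul (twistedDerivative p) y) y := by
  have hexp := ((hasDerivAt_pow 3 (y : ℂ)).div_const 6).cexp.comp_ofReal
  refine (hexp.mul (p.hasDerivAt (y : ℂ)).comp_ofReal).congr_deriv ?_
  simp only [expCubicMul, twistedDerivative, eval_add, eval_mul, eval_C, eval_pow, eval_X]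
  push_cast
  ring

noncomputable def expCubicPair : ℂ[X] × ℂ[X] →ₗ[ℂ] ℝ → Fin 2 → ℂ where
  toFun w y := ![expCubicMul w.1 y, expCubicMul w.2 y]
  map_add' v w := by
    funext y i
    fin_cases i <;> simp [expCubicMul, mul_add]
  map_smul' c w := by
    funext y i
    fin_cases i <;> simp [expCubicMul, mul_left_comm]

theorem deriv_expCubicPair (w : ℂ[X] × ℂ[X]) :
    deriv (expCubicPair w) = expCubicPair (w.map twistedDerivative twistedDerivative) := by
  funext y
  refine (hasDerivAt_pi.2 fun i => ?_).deriv
  fin_cases i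
  · exact hasDerivAt_expCubicMul w.1 y
  · exact hasDerivAt_expCubicMul w.2 y

noncomputable def conjHop (m : ℕ) (w : ℂ[X] × ℂ[X]) : ℂ[X] × ℂ[X] :=
  (derivative (derivative w.1) + X ^ 2 * derivative w.1 + (2 - (m : ℂ[X])) * X * w.1 + w.2,
    derivative (derivative w.2) + X ^ 2 * derivative w.2 - (m : ℂ[X]) * X * w.2 + w.1)

theorem Hop_expCubicPair (m : ℕ) (w : ℂ[X] × ℂ[X]) :
    Hop m (expCubicPair w) = expCubicPair (conjHop m w) := by
  funext y i
  simp only [Hop, deriv_expCubicPair, Prod.map]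
  fin_cases i <;>
    simp [expCubicPair, expCubicMul, conjHop, twistedDerivative, σ1, σ3] <;> ring

noncomputable def lowerPair (m : ℕ) : ℂ[X] →ₗ[ℂ] ℂ[X] × ℂ[X] :=
  (-derivative).prod (LinearMap.mulLeft ℂ (m : ℂ[X]))

noncomputable def pairSpace (m : ℕ) : Submodule ℂ (ℂ[X] × ℂ[X]) :=
  (degreeLT ℂ (m - 1)).map (LinearMap.inl ℂ ℂ[X] ℂ[X]) ⊔ (degreeLT ℂ (m + 1)).map (lowerPair m)

theorem expCubicPair_inl_X_pow (j : ℕ) :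
    expCubicPair (LinearMap.inl ℂ ℂ[X] ℂ[X] (X ^ j)) =
      fun y : ℝ => Complex.exp ((y : ℂ) ^ 3 / 6) • (((y : ℂ) ^ j) • e1) := by
  funext y i
  fin_cases i <;> simp [expCubicPair, expCubicMul, e1]

theorem expCubicPair_lowerPair_X_pow (m k : ℕ) :
    expCubicPair (lowerPair m (X ^ k)) =
      fun y : ℝ => Complex.exp ((y : ℂ) ^ 3 / 6) •
        (((m : ℂ) * (y : ℂ) ^ k) • e2 - ((k : ℂ) * (y : ℂ) ^ (k - 1)) • e1) := by
  funext y i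
  fin_cases i <;> simp [expCubicPair, expCubicMul, lowerPair, e1, e2, derivative_X_pow]

theorem span_basisSet (m : ℕ) :
    Submodule.span ℂ (basisSet m) = (pairSpace m).map expCubicPair := by
  apply le_antisymm
  · rw [Submodule.span_le]
    rintro _ (⟨j, hj, rfl⟩ | ⟨k, hk, rfl⟩)
    · rw [← expCubicPair_inl_X_pow]
      exact Submodule.mem_map_of_mem
        (Submodule.mem_sup_left (Submodule.mem_map_of_mem (X_pow_mem_degreeLT (by omega))))
    · rw [← expCubicPair_lowerPair_X_pow]
      exact Submodule.mem_map_of_mem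
        (Submodule.mem_sup_right (Submodule.mem_map_of_mem (X_pow_mem_degreeLT (by omega))))
  · classical
    rw [Submodule.map_le_iff_le_comap, pairSpace, sup_le_iff, Submodule.map_le_iff_le_comap,
      Submodule.map_le_iff_le_comap, degreeLT_eq_span_X_pow, degreeLT_eq_span_X_pow,
      Submodule.span_le, Submodule.span_le, Finset.coe_image, Finset.coe_image,
      Set.image_subset_iff, Set.image_subset_iff]
    constructor
    · intro j hj
      rw [Finset.mem_coe, Finset.mem_range] at hj
      exact Submodule.subset_span (Or.inl ⟨j, by omega, expCubicPair_inl_X_pow j⟩)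
    · intro k hk
      rw [Finset.mem_coe, Finset.mem_range] at hk
      exact Submodule.subset_span (Or.inr ⟨k, by omega, expCubicPair_lowerPair_X_pow m k⟩)

theorem conjHop_inl_add_lowerPair {m : ℕ} (hm : (m : ℂ) ≠ 0) (p q : ℂ[X]) :
    conjHop m (LinearMap.inl ℂ ℂ[X] ℂ[X] p + lowerPair m q) =
      LinearMap.inl ℂ ℂ[X] ℂ[X]
          (derivative (derivative p) + (X ^ 2 * derivative p - ((m : ℂ[X]) - 2) * X * p)
            + C (m : ℂ)⁻¹ * (derivative p - derivative (derivative q))) +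
        lowerPair m (derivative (derivative q) + (X ^ 2 * derivative q - (m : ℂ[X]) * X * q)
          + C (m : ℂ)⁻¹ * (p - derivative q)) := by
  have hinv : (m : ℂ[X]) * C (m : ℂ)⁻¹ = 1 := by
    rw [← C_eq_natCast, ← C_mul, mul_inv_cancel₀ hm, C_1]
  ext1
  · simp [conjHop, lowerPair, derivative_mul]
    ring
  · simp [conjHop, lowerPair, derivative_mul]
    linear_combination (derivative q - p) * hinv

theorem conjHop_mem_pairSpace {m : ℕ} (hm : 1 ≤ m) {w : ℂ[X] × ℂ[X]} (hw : w ∈ pairSpace m) :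
    conjHop m w ∈ pairSpace m := by
  obtain ⟨_, ⟨p, hp, rfl⟩, _, ⟨q, hq, rfl⟩, rfl⟩ := Submodule.mem_sup.1 hw
  have hD {n : ℕ} {r : ℂ[X]} (hr : r ∈ degreeLT ℂ n) : derivative r ∈ degreeLT ℂ n :=
    mem_degreeLT.2 (degree_derivative_le.trans_lt (mem_degreeLT.1 hr))
  have hC {n : ℕ} {r : ℂ[X]} (hr : r ∈ degreeLT ℂ n) : C (m : ℂ)⁻¹ * r ∈ degreeLT ℂ n := by
    rw [← smul_eq_C_mul]
    exact Submodule.smul_mem _ _ hr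
  have hq'' : derivative (derivative q) ∈ degreeLT ℂ (m - 1) := by
    refine derivative_mem_degreeLT (derivative_mem_degreeLT ?_)
    rwa [Nat.sub_add_cancel hm]
  have hpq := degreeLT_mono (by omega : m - 1 ≤ m + 1) hp
  have hEp : X ^ 2 * derivative p - ((m : ℂ[X]) - 2) * X * p ∈ degreeLT ℂ (m - 1) := by
    convert X_sq_mul_derivative_sub_mem_degreeLT hp using 4
    push_cast [Nat.cast_sub hm]
    ring
  have hEq : X ^ 2 * derivative q - (m : ℂ[X]) * X * q ∈ degreeLT ℂ (m + 1) := by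
    convert X_sq_mul_derivative_sub_mem_degreeLT hq using 4
    push_cast
    ring
  rw [conjHop_inl_add_lowerPair (by exact_mod_cast (by omega : m ≠ 0))]
  refine Submodule.add_mem_sup (Submodule.mem_map_of_mem ?_) (Submodule.mem_map_of_mem ?_)
  · exact add_mem (add_mem (hD (hD hp)) hEp) (hC (sub_mem (hD hp) hq''))
  · exact add_mem (add_mem (hD (hD hq)) hEq) (hC (sub_mem hpq (hD hq)))

theorem stmt_19 (m : ℕ) (hm : 1 ≤ m) :
    ∀ ψ ∈ Submodule.span ℂ (basisSet m),
      Hop m ψ ∈ Submodule.span ℂ (basisSet m) := by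
  rw [span_basisSet]
  rintro _ ⟨w, hw, rfl⟩
  rw [Hop_expCubicPair]
  exact Submodule.mem_map_of_mem (conjHop_mem_pairSpace hm hw)
end
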